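/- Let n ≥ 7. The power graph of the alternating group Aₙ contains an induced path on 5 vertices. Explicitly, for n = 7 the elements (1 2 3 4)(5 6), (1 3)(2 4), (1 3)(2 4)(5 6 7), (5 6 7), (1 2)(3 4)(5 6 7) form an induced P₅ in P(A₇). -/

import Mathlib

/-!
With `b = (1 3)(2 4)` and `d = (5 6 7)`: `b` is the square of `a = (1 2 3 4)(5 6)`, while `b` and
`d` commute with coprime orders, so `c = bd` has order `6` with `c³ = b` and `c⁴ = d`; likewise
`e = (1 2)(3 4) d` satisfies `e⁴ = d`. This gives the path `a - b - c - d - e` in `P(A₇)`, and a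
finite computation of cyclic subgroups rules out the other edges. For `n ≥ 7`, `A₇` embeds in
`Aₙ`, and an injective homomorphism embeds power graphs as induced subgraphs.
-/

def powerGraph (G : Type*) [Group G] : SimpleGraph G where
  Adj u v := u ≠ v ∧ (u ∈ Subgroup.zpowers v ∨ v ∈ Subgroup.zpowers u)
  symm := by
    constructor
    rintro u v ⟨h1, h2⟩
    exact ⟨h1.symm, h2.symm⟩
  loopless := by
    constructor
    rintro v ⟨h1, _⟩
    exact h1 rfl

/-- `Γ` contains an induced path on 5 vertices. -/
def HasInducedP5 {V : Type*} (Γ : SimpleGraph V) : Prop :=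
  ∃ a b c d e : V,
    a ≠ b ∧ a ≠ c ∧ a ≠ d ∧ a ≠ e ∧ b ≠ c ∧ b ≠ d ∧ b ≠ e ∧ c ≠ d ∧ c ≠ e ∧ d ≠ e ∧
    Γ.Adj a b ∧ Γ.Adj b c ∧ Γ.Adj c d ∧ Γ.Adj d e ∧
    ¬Γ.Adj a c ∧ ¬Γ.Adj a d ∧ ¬Γ.Adj a e ∧ ¬Γ.Adj b d ∧ ¬Γ.Adj b e ∧ ¬Γ.Adj c e

/-- `Γ` contains an induced copy of `P₂ ∪ P₃`. -/
def HasInducedP2UnionP3 {V : Type*} (Γ : SimpleGraph V) : Prop :=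
  ∃ a b c d e : V,
    a ≠ b ∧ a ≠ c ∧ a ≠ d ∧ a ≠ e ∧ b ≠ c ∧ b ≠ d ∧ b ≠ e ∧ c ≠ d ∧ c ≠ e ∧ d ≠ e ∧
    Γ.Adj a b ∧ Γ.Adj c d ∧ Γ.Adj d e ∧
    ¬Γ.Adj a c ∧ ¬Γ.Adj a d ∧ ¬Γ.Adj a e ∧ ¬Γ.Adj b c ∧ ¬Γ.Adj b d ∧ ¬Γ.Adj b e ∧ ¬Γ.Adj c e

/-- `Γ` contains an induced diamond (`K₄` minus an edge). -/
def HasInducedDiamond {V : Type*} (Γ : SimpleGraph V) : Prop :=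
  ∃ a b c d : V,
    a ≠ b ∧ a ≠ c ∧ a ≠ d ∧ b ≠ c ∧ b ≠ d ∧ c ≠ d ∧
    Γ.Adj a b ∧ Γ.Adj a c ∧ Γ.Adj b c ∧ Γ.Adj b d ∧ Γ.Adj c d ∧ ¬Γ.Adj a d

open Equiv Equiv.Perm Subgroup

section PowerGraph

variable {G H : Type*} [Group G] [Group H]

theorem powerGraph_adj {u v : G} :
    (powerGraph G).Adj u v ↔ u ≠ v ∧ (u ∈ zpowers v ∨ v ∈ zpowers u) :=
  Iff.rfl

theorem mem_zpowers_iff_exists_pow_of_pow_eq_one {x y : G} {m : ℕ} (hm : 0 < m)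
    (hy : y ^ m = 1) : x ∈ zpowers y ↔ ∃ k < m, y ^ k = x := by
  rw [← (isOfFinOrder_iff_pow_eq_one.2 ⟨m, hm, hy⟩).mem_powers_iff_mem_zpowers]
  constructor
  · rintro ⟨k, rfl⟩
    exact ⟨k % m, Nat.mod_lt k hm, (pow_eq_pow_mod k hy).symm⟩
  · rintro ⟨k, -, rfl⟩
    exact ⟨k, rfl⟩

theorem powerGraph_adj_iff_of_pow_eq_one {u v : G} {m : ℕ} (hm : 0 < m) (hu : u ^ m = 1)
    (hv : v ^ m = 1) :
    (powerGraph G).Adj u v ↔ u ≠ v ∧ ((∃ k < m, v ^ k = u) ∨ ∃ k < m, u ^ k = v) := by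
  rw [powerGraph_adj, mem_zpowers_iff_exists_pow_of_pow_eq_one hm hv,
    mem_zpowers_iff_exists_pow_of_pow_eq_one hm hu]

def MonoidHom.powerGraphEmbedding (f : G →* H) (hf : Function.Injective f) :
    powerGraph G ↪g powerGraph H where
  toEmbedding := ⟨f, hf⟩
  map_rel_iff' := by
    intro u v
    simp only [powerGraph_adj, Function.Embedding.coeFn_mk, hf.ne_iff,
      ← MonoidHom.map_zpowers, mem_map_iff_mem hf]

end PowerGraph

section InducedP5

variable {V W : Type*}

def IsInducedP5 (Γ : SimpleGraph V) (a b c d e : V) : Prop :=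
  a ≠ b ∧ a ≠ c ∧ a ≠ d ∧ a ≠ e ∧ b ≠ c ∧ b ≠ d ∧ b ≠ e ∧ c ≠ d ∧ c ≠ e ∧ d ≠ e ∧
    Γ.Adj a b ∧ Γ.Adj b c ∧ Γ.Adj c d ∧ Γ.Adj d e ∧
    ¬Γ.Adj a c ∧ ¬Γ.Adj a d ∧ ¬Γ.Adj a e ∧ ¬Γ.Adj b d ∧ ¬Γ.Adj b e ∧ ¬Γ.Adj c e

theorem SimpleGraph.Embedding.isInducedP5_iff {Γ : SimpleGraph V} {Δ : SimpleGraph W}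
    (f : Γ ↪g Δ) {a b c d e : V} :
    IsInducedP5 Δ (f a) (f b) (f c) (f d) (f e) ↔ IsInducedP5 Γ a b c d e := by
  simp only [IsInducedP5, f.map_adj_iff, f.injective.ne_iff]

theorem HasInducedP5.map {Γ : SimpleGraph V} {Δ : SimpleGraph W} (f : Γ ↪g Δ)
    (h : HasInducedP5 Γ) : HasInducedP5 Δ := by
  obtain ⟨a, b, c, d, e, h⟩ := h
  exact ⟨f a, f b, f c, f d, f e, f.isInducedP5_iff.2 h⟩

end InducedP5

section AlternatingGroup

variable {α β : Type*} [Fintype α] [DecidableEq α] [Fintype β] [DecidableEq β]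

noncomputable def alternatingGroup.viaEmbeddingHom (ι : α ↪ β) :
    alternatingGroup α →* alternatingGroup β :=
  ((Perm.viaEmbeddingHom ι).comp (alternatingGroup α).subtype).codRestrict _ fun σ => by
    classical
    rw [MonoidHom.comp_apply, viaEmbeddingHom_apply, viaEmbedding, mem_alternatingGroup,
      coe_subtype, sign_extendDomain, mem_alternatingGroup.1 σ.2]

theorem alternatingGroup.viaEmbeddingHom_injective (ι : α ↪ β) :
    Function.Injective (alternatingGroup.viaEmbeddingHom ι) := fun _ _ h =>
  Subtype.ext (Perm.viaEmbeddingHom_injective ι (congrArg Subtype.val h))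

end AlternatingGroup

-- Points of `Fin 7` are numbered from `0`, so `c[0, 1, 2, 3] * c[4, 5]` is `(1 2 3 4)(5 6)`.
-- All five elements have order dividing `12`, which makes adjacency a finite check.
set_option maxRecDepth 10000 in
theorem isInducedP5_powerGraph_perm_fin_seven :
    IsInducedP5 (powerGraph (Perm (Fin 7))) (c[0, 1, 2, 3] * c[4, 5]) (c[0, 2] * c[1, 3])
      (c[0, 2] * c[1, 3] * c[4, 5, 6]) c[4, 5, 6] (c[0, 1] * c[2, 3] * c[4, 5, 6]) := by
  simp (disch := decide) only [IsInducedP5, powerGraph_adj_iff_of_pow_eq_one (m := 12)]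
  and_intros <;> decide

theorem hasInducedP5_powerGraph_alternatingGroup_fin_seven :
    HasInducedP5 (powerGraph (alternatingGroup (Fin 7))) := by
  let ι := (alternatingGroup (Fin 7)).subtype.powerGraphEmbedding Subtype.val_injective
  exact ⟨⟨_, mem_alternatingGroup.2 (by decide)⟩, ⟨_, mem_alternatingGroup.2 (by decide)⟩,
    ⟨_, mem_alternatingGroup.2 (by decide)⟩, ⟨_, mem_alternatingGroup.2 (by decide)⟩,
    ⟨_, mem_alternatingGroup.2 (by decide)⟩,
    ι.isInducedP5_iff.1 isInducedP5_powerGraph_perm_fin_seven⟩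

theorem alternating_hasInducedP5 (n : ℕ) (hn : 7 ≤ n) :
    HasInducedP5 (powerGraph ↥(alternatingGroup (Fin n))) :=
  hasInducedP5_powerGraph_alternatingGroup_fin_seven.map <|
    (alternatingGroup.viaEmbeddingHom (Fin.castLEEmb hn)).powerGraphEmbedding
      (alternatingGroup.viaEmbeddingHom_injective _)
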